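/- For probability mass functions P_A, P_B on a finite set X ⊂ ℝ with |X| > 1 and any injective f : X → T ⊂ ℝ with T finite and |T| > 1, PC_T(f∗P_A, f∗P_B) = ((max T − min T)/(max X − min X)) · PC_X(P_A, P_B), where PC_S(P,Q) denotes the maximum over g : S → S of ∑_{s∈S} g(s)(P(s) − Q(s)). -/

import Mathlib

/-!
Against a zero-sum signed measure `μ` on `S`, the best response `g : S → S` sends every point of
positive mass to `max S` and every other point to `min S`, so the potential contrast equals
`(max S - min S) * ∑ μ⁺`. An injective map into `T` only relabels the atoms of `μ = P_A - P_B`,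
so `∑ μ⁺` is the same on both sides and only the width of the value set changes.
-/

open Finset

noncomputable section

def pushforward {α β M : Type*} [DecidableEq β] [AddCommMonoid M]
    (X : Finset α) (f : α → β) (P : α → M) (t : β) : M :=
  ∑ x ∈ X, if f x = t then P x else 0

def potentialContrast (S : Finset ℝ) (μ : ℝ → ℝ) : ℝ :=
  sSup {v : ℝ | ∃ g : ℝ → ℝ, (∀ s ∈ S, g s ∈ S) ∧ v = ∑ s ∈ S, g s * μ s}

end

section Pushforward

variable {α β M : Type*} [DecidableEq β]

lemma pushforward_sub [AddCommGroup M] (X : Finset α) (f : α → β) (P Q : α → M) (t : β) :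
    pushforward X f P t - pushforward X f Q t = pushforward X f (fun x => P x - Q x) t := by
  rw [pushforward, pushforward, pushforward, ← sum_sub_distrib]
  refine sum_congr rfl fun x _ => ?_
  split_ifs <;> simp

lemma pushforward_apply_of_injOn [AddCommMonoid M] {X : Finset α} {f : α → β}
    (hf : Set.InjOn f X) (P : α → M) {x : α} (hx : x ∈ X) :
    pushforward X f P (f x) = P x := by
  rw [pushforward, sum_eq_single_of_mem x hx (fun y hy hyx => if_neg (hf.ne hy hx hyx)), if_pos rfl]

lemma pushforward_eq_zero_of_notMem_image [DecidableEq α] [AddCommMonoid M]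
    {X : Finset α} {f : α → β} (P : α → M) {t : β} (ht : t ∉ X.image f) :
    pushforward X f P t = 0 :=
  sum_eq_zero fun x hx => if_neg fun hxt => ht (mem_image.mpr ⟨x, hx, hxt⟩)

lemma sum_comp_pushforward [AddCommMonoid M] {N : Type*} [AddCommMonoid N]
    {X : Finset α} {T : Finset β} {f : α → β} (hf : Set.InjOn f X) (hfT : ∀ x ∈ X, f x ∈ T)
    (P : α → M) (φ : M → N) (hφ : φ 0 = 0) :
    ∑ t ∈ T, φ (pushforward X f P t) = ∑ x ∈ X, φ (P x) := by
  classical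
  have himage : X.image f ⊆ T := image_subset_iff.mpr hfT
  rw [← sum_subset himage fun t _ ht => by rw [pushforward_eq_zero_of_notMem_image P ht, hφ],
    sum_image fun x hx y hy => @hf x hx y hy]
  exact sum_congr rfl fun x hx => by rw [pushforward_apply_of_injOn hf P hx]

end Pushforward

lemma sum_posPart_eq_sum_negPart {ι G : Type*} [AddCommGroup G] [Lattice G]
    [IsOrderedAddMonoid G] {s : Finset ι} {μ : ι → G} (hμ : ∑ i ∈ s, μ i = 0) :
    ∑ i ∈ s, (μ i)⁺ = ∑ i ∈ s, (μ i)⁻ := by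
  rw [← sub_eq_zero, ← sum_sub_distrib, ← hμ]
  exact sum_congr rfl fun i _ => posPart_sub_negPart (μ i)

lemma mul_le_mul_posPart_sub_mul_negPart {m y M : ℝ} (hm : m ≤ y) (hM : y ≤ M) (a : ℝ) :
    y * a ≤ M * a⁺ - m * a⁻ := by
  calc y * a = y * a⁺ - y * a⁻ := by rw [← mul_sub, posPart_sub_negPart]
    _ ≤ M * a⁺ - m * a⁻ := sub_le_sub (mul_le_mul_of_nonneg_right hM (posPart_nonneg a))
        (mul_le_mul_of_nonneg_right hm (negPart_nonneg a))

lemma ite_nonneg_mul_eq (M m a : ℝ) :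
    (if 0 ≤ a then M else m) * a = M * a⁺ - m * a⁻ := by
  split_ifs with ha
  · simp [posPart_eq_self.mpr ha, negPart_eq_zero.mpr ha]
  · have ha : a ≤ 0 := (not_le.mp ha).le
    simp [posPart_eq_zero.mpr ha, negPart_eq_neg.mpr ha]

lemma isGreatest_sum_mul (S : Finset ℝ) (hS : S.Nonempty) {μ : ℝ → ℝ}
    (hμ : ∑ s ∈ S, μ s = 0) :
    IsGreatest {v : ℝ | ∃ g : ℝ → ℝ, (∀ s ∈ S, g s ∈ S) ∧ v = ∑ s ∈ S, g s * μ s}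
      ((S.max' hS - S.min' hS) * ∑ s ∈ S, (μ s)⁺) := by
  have hbound : (S.max' hS - S.min' hS) * ∑ s ∈ S, (μ s)⁺
      = ∑ s ∈ S, (S.max' hS * (μ s)⁺ - S.min' hS * (μ s)⁻) := by
    rw [sum_sub_distrib, ← mul_sum, ← mul_sum, ← sum_posPart_eq_sum_negPart hμ, sub_mul]
  rw [hbound]
  constructor
  · refine ⟨fun s => if 0 ≤ μ s then S.max' hS else S.min' hS, fun s _ => ?_,
      sum_congr rfl fun s _ => (ite_nonneg_mul_eq _ _ _).symm⟩
    dsimp only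
    split_ifs
    exacts [S.max'_mem hS, S.min'_mem hS]
  · rintro v ⟨g, hg, rfl⟩
    exact sum_le_sum fun s hs =>
      mul_le_mul_posPart_sub_mul_negPart (S.min'_le _ (hg s hs)) (S.le_max' _ (hg s hs)) _

lemma potentialContrast_eq (S : Finset ℝ) (hS : S.Nonempty) {μ : ℝ → ℝ}
    (hμ : ∑ s ∈ S, μ s = 0) :
    potentialContrast S μ = (S.max' hS - S.min' hS) * ∑ s ∈ S, (μ s)⁺ :=
  (isGreatest_sum_mul S hS hμ).csSup_eq

theorem potential_contrast_rescaling_general (X T : Finset ℝ)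
    (hX : 1 < X.card)
    (hXne : X.Nonempty) (hTne : T.Nonempty)
    (f : ℝ → ℝ) (hf : Set.InjOn f X) (hfT : ∀ x ∈ X, f x ∈ T)
    (PA PB : ℝ → ℝ)
    (hA1 : ∑ x ∈ X, PA x = 1) (hB1 : ∑ x ∈ X, PB x = 1) :
    sSup {v : ℝ | ∃ g : ℝ → ℝ, (∀ t ∈ T, g t ∈ T) ∧
        v = ∑ t ∈ T, g t * ((∑ x ∈ X, if f x = t then PA x else 0)
              - (∑ x ∈ X, if f x = t then PB x else 0))}
      = ((T.max' hTne - T.min' hTne) / (X.max' hXne - X.min' hXne))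
          * sSup {v : ℝ | ∃ g : ℝ → ℝ, (∀ x ∈ X, g x ∈ X) ∧
              v = ∑ x ∈ X, g x * (PA x - PB x)} := by
  set μ : ℝ → ℝ := fun x => PA x - PB x
  change potentialContrast T (fun t => pushforward X f PA t - pushforward X f PB t)
    = _ * potentialContrast X μ
  simp_rw [pushforward_sub]
  have hμ : ∑ x ∈ X, μ x = 0 := by simp [μ, sum_sub_distrib, hA1, hB1]
  have hν : ∑ t ∈ T, pushforward X f μ t = 0 := by
    simpa [hμ] using sum_comp_pushforward hf hfT μ id rfl
  have hXwidth : X.max' hXne - X.min' hXne ≠ 0 := (sub_pos.mpr (X.min'_lt_max'_of_card hX)).ne'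
  rw [potentialContrast_eq T hTne hν, potentialContrast_eq X hXne hμ,
    sum_comp_pushforward hf hfT μ _ posPart_zero]
  field_simp

theorem potential_contrast_rescaling (X T : Finset ℝ)
    (hX : 1 < X.card) (hT : 1 < T.card)
    (hXne : X.Nonempty) (hTne : T.Nonempty)
    (f : ℝ → ℝ) (hf : Set.InjOn f X) (hfT : ∀ x ∈ X, f x ∈ T)
    (PA PB : ℝ → ℝ)
    (hA0 : ∀ x ∈ X, 0 ≤ PA x) (hB0 : ∀ x ∈ X, 0 ≤ PB x)
    (hA1 : ∑ x ∈ X, PA x = 1) (hB1 : ∑ x ∈ X, PB x = 1) :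
    sSup {v : ℝ | ∃ g : ℝ → ℝ, (∀ t ∈ T, g t ∈ T) ∧
        v = ∑ t ∈ T, g t * ((∑ x ∈ X, if f x = t then PA x else 0)
              - (∑ x ∈ X, if f x = t then PB x else 0))}
      = ((T.max' hTne - T.min' hTne) / (X.max' hXne - X.min' hXne))
          * sSup {v : ℝ | ∃ g : ℝ → ℝ, (∀ x ∈ X, g x ∈ X) ∧
              v = ∑ x ∈ X, g x * (PA x - PB x)} :=
  potential_contrast_rescaling_general X T hX hXne hTne f hf hfT PA PB hA1 hB1
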